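/- arXiv:1211.6555 — 3 statements merged into one kernel-verified Lean document; each statement's English description precedes it below -/
import Mathlib

section
/- Let H be the connected graph that is the union of the complete graph K_m on vertices v_{α_1},…,v_{α_m} (1 ≤ α_1 < α_2 < … < α_m = n, m < n) and a single star graph whose center is v_{α_i} for some i with 2 ≤ i ≤ m, and whose leaves are the vertices v_{α_{i−1}+1},…,v_{α_i−1} (the n − m vertices outside K_m). Then the ideal of vertex covers I_c(H) has exactly m minimal monomial squarefree generators, namely: for each j ≠ i, the monomial ∏_{l≠j} X_{α_l} (the product over all K_m-vertices except v_{α_j}), together with the monomial (∏_{l≠i} X_{α_l})·X_{α_{i−1}+1}⋯X_{α_i−1} (the product over all K_m-vertices except the center, multiplied by all leaves of the star). -/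
/-!
The minimal monomial generators of `I_c(G)` are the products `∏ v ∈ C, X v` over the minimal
vertex covers `C` of `G`. When `G` is a clique on `A` together with a star with centre `c ∈ A`
and leaves `L`, a minimal cover misses exactly one clique vertex `a`: at most one because clique
vertices are pairwise adjacent, and at least one because otherwise `A \ {a}` for some `a ≠ c`
would be a smaller cover. It therefore contains `A \ {a}`, and also `L` when `a = c`; as these
sets are already covers, minimality forces equality.
-/

open MvPolynomial Finset

/-- A set of vertices is a vertex cover if it meets every edge. -/
def IsVertexCover {V : Type*} (G : SimpleGraph V) (C : Set V) : Prop :=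
  ∀ ⦃u v : V⦄, G.Adj u v → u ∈ C ∨ v ∈ C

/-- The ideal of vertex covers of a graph on `Fin n`. -/
noncomputable def coverIdeal (K : Type*) [Field K] {n : ℕ} (G : SimpleGraph (Fin n)) :
    Ideal (MvPolynomial (Fin n) K) :=
  Ideal.span { p | ∃ C : Finset (Fin n), IsVertexCover G ↑C ∧ p = ∏ i ∈ C, X i }

/-- The edge ideal of a graph on `Fin n`. -/
noncomputable def edgeIdeal (K : Type*) [Field K] {n : ℕ} (G : SimpleGraph (Fin n)) :
    Ideal (MvPolynomial (Fin n) K) :=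
  Ideal.span { p | ∃ u v : Fin n, G.Adj u v ∧ p = X u * X v }

/-- `p` is a minimal monomial generator of the monomial ideal `I`:
it is a monomial in `I` none of whose proper monomial divisors lies in `I`. -/
def IsMinimalMonomialGen {K : Type*} [Field K] {n : ℕ}
    (I : Ideal (MvPolynomial (Fin n) K)) (p : MvPolynomial (Fin n) K) : Prop :=
  ∃ a : Fin n →₀ ℕ, p = monomial a (1 : K) ∧ p ∈ I ∧
    ∀ b : Fin n →₀ ℕ, b ≤ a → b ≠ a → monomial b (1 : K) ∉ I

/-- The maximal graded ideal (X_1, …, X_n) of the polynomial ring. -/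
noncomputable def gradedMaxIdeal (K : Type*) [Field K] (n : ℕ) :
    Ideal (MvPolynomial (Fin n) K) :=
  Ideal.span (Set.range X)

/-- The set of lengths of regular sequences on `R/I` consisting of elements of the
maximal graded ideal; its greatest element is the depth of `R/I`. -/
def depthSet (K : Type*) [Field K] {n : ℕ} (I : Ideal (MvPolynomial (Fin n) K)) : Set ℕ :=
  {k | ∃ rs : List (MvPolynomial (Fin n) K), rs.length = k ∧
    (∀ r ∈ rs, r ∈ gradedMaxIdeal K n) ∧
    RingTheory.Sequence.IsRegular (MvPolynomial (Fin n) K ⧸ I) rs}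

/-- A minimal graded free resolution of `R/I`:
`⋯ → F₂ → F₁ → F₀ = R → R/I → 0`, where `F_{j+1}` is free of rank `rk j` with
generator degrees `dgr j`, the map `F₁ → R` is given by the row `g` (whose image is `I`),
and the map `F_{j+2} → F_{j+1}` is given by the matrix `M j`.  All matrix entries are
homogeneous of the appropriate degree and lie in the maximal graded ideal (minimality),
and the complex is exact at every `F_{j}`, `j ≥ 1`. -/
def IsMinimalGradedFreeResolution {K : Type*} [Field K] {n : ℕ}
    (I : Ideal (MvPolynomial (Fin n) K))
    (rk : ℕ → ℕ) (dgr : ∀ j : ℕ, Fin (rk j) → ℕ)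
    (g : Fin (rk 0) → MvPolynomial (Fin n) K)
    (M : ∀ j : ℕ, Matrix (Fin (rk j)) (Fin (rk (j + 1))) (MvPolynomial (Fin n) K)) : Prop :=
  Ideal.span (Set.range g) = I ∧
  (∀ i, (g i).IsHomogeneous (dgr 0 i)) ∧
  (∀ i, constantCoeff (g i) = 0) ∧
  (∀ (j : ℕ) (k : Fin (rk j)) (i : Fin (rk (j + 1))),
      (M j k i).IsHomogeneous (dgr (j + 1) i - dgr j k)) ∧
  (∀ (j : ℕ) (k : Fin (rk j)) (i : Fin (rk (j + 1))),
      dgr (j + 1) i ≤ dgr j k → M j k i = 0) ∧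
  LinearMap.ker (Fintype.linearCombination (MvPolynomial (Fin n) K) g)
    = LinearMap.range (M 0).mulVecLin ∧
  (∀ j : ℕ, LinearMap.ker (M j).mulVecLin = LinearMap.range (M (j + 1)).mulVecLin)

section VertexCover

variable {V : Type*} {G : SimpleGraph V}

theorem minimal_isVertexCover_of_forall_exists_adj {C : Finset V} (hC : IsVertexCover G ↑C)
    (h : ∀ x ∈ C, ∃ y ∉ C, G.Adj x y) :
    Minimal (fun D : Finset V => IsVertexCover G ↑D) C := by
  refine ⟨hC, fun D hD hDC x hx => ?_⟩
  obtain ⟨y, hyC, hxy⟩ := h x hx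
  exact (hD hxy).resolve_right fun hyD => hyC (hDC hyD)

def SimpleGraph.IsCliqueUnionStar (G : SimpleGraph V) (A : Set V) (c : V) (L : Set V) : Prop :=
  ∀ u v, G.Adj u v ↔ (u ∈ A ∧ v ∈ A ∧ u ≠ v) ∨ (u = c ∧ v ∈ L) ∨ (v = c ∧ u ∈ L)

variable [DecidableEq V] {A L : Finset V} {c : V}

theorem isVertexCover_erase_of_ne_center (hG : G.IsCliqueUnionStar A c L) (hc : c ∈ A) {a : V}
    (hac : a ≠ c) : IsVertexCover G ↑(A.erase a) := by
  intro u v huv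
  have := (hG u v).1 huv
  simp only [Finset.coe_erase, Set.mem_sdiff, Finset.mem_coe, Set.mem_singleton_iff] at this ⊢
  grind

theorem isVertexCover_erase_center_union (hG : G.IsCliqueUnionStar A c L) :
    IsVertexCover G ↑(A.erase c ∪ L) := by
  intro u v huv
  have := (hG u v).1 huv
  simp only [Finset.coe_union, Finset.coe_erase, Set.mem_union, Set.mem_sdiff, Finset.mem_coe,
    Set.mem_singleton_iff] at this ⊢
  grind

theorem minimal_isVertexCover_iff_of_isCliqueUnionStar (hG : G.IsCliqueUnionStar A c L)
    (hc : c ∈ A) (hA : ∃ a ∈ A, a ≠ c) (C : Finset V) :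
    Minimal (fun D : Finset V => IsVertexCover G ↑D) C ↔
      C = A.erase c ∪ L ∨ ∃ a ∈ A, a ≠ c ∧ C = A.erase a := by
  have hcL : c ∉ L := fun h => G.irrefl ((hG c c).2 (Or.inr (Or.inl ⟨rfl, h⟩)))
  constructor
  · intro hC
    by_cases hAC : A ⊆ C
    · obtain ⟨a, ha, hac⟩ := hA
      have hCa := hC.2 (isVertexCover_erase_of_ne_center hG hc hac)
        ((Finset.erase_subset a A).trans hAC) (hAC ha)
      exact absurd hCa (Finset.notMem_erase a A)
    obtain ⟨a, ha, haC⟩ := Finset.not_subset.1 hAC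
    have hAaC : A.erase a ⊆ C := fun x hx => (hC.1 ((hG x a).2
      (Or.inl ⟨Finset.mem_of_mem_erase hx, ha, Finset.ne_of_mem_erase hx⟩))).resolve_right haC
    obtain rfl | hac := eq_or_ne a c
    · have hLC : L ⊆ C := fun w hw =>
        (hC.1 ((hG a w).2 (Or.inr (Or.inl ⟨rfl, hw⟩)))).resolve_left haC
      exact Or.inl (hC.eq_of_ge (isVertexCover_erase_center_union hG)
        (Finset.union_subset hAaC hLC))
    · exact Or.inr ⟨a, ha, hac, hC.eq_of_ge (isVertexCover_erase_of_ne_center hG hc hac) hAaC⟩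
  · rintro (rfl | ⟨a, ha, hac, rfl⟩)
    · refine minimal_isVertexCover_of_forall_exists_adj (isVertexCover_erase_center_union hG)
        fun x hx => ⟨c, by simp [hcL], (hG x c).2 ?_⟩
      grind
    · refine minimal_isVertexCover_of_forall_exists_adj
        (isVertexCover_erase_of_ne_center hG hc hac)
        fun x hx => ⟨a, Finset.notMem_erase a A, (hG x a).2 ?_⟩
      grind

end VertexCover

section SquarefreeMonomial

variable {σ : Type*}

noncomputable def squarefreeExponent (C : Finset σ) : σ →₀ ℕ := ∑ i ∈ C, Finsupp.single i 1

theorem squarefreeExponent_apply [DecidableEq σ] (C : Finset σ) (x : σ) :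
    squarefreeExponent C x = if x ∈ C then 1 else 0 := by
  simp [squarefreeExponent, Finsupp.finsetSum_apply, Finsupp.single_apply]

@[simp]
theorem support_squarefreeExponent (C : Finset σ) : (squarefreeExponent C).support = C := by
  classical
  ext x
  simp [Finsupp.mem_support_iff, squarefreeExponent_apply]

theorem squarefreeExponent_le_iff {C : Finset σ} {a : σ →₀ ℕ} :
    squarefreeExponent C ≤ a ↔ C ⊆ a.support := by
  classical
  simp only [Finsupp.le_def, squarefreeExponent_apply, Finset.subset_iff, Finsupp.mem_support_iff]
  refine forall_congr' fun x => ?_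
  split_ifs <;> simp [Nat.one_le_iff_ne_zero, *]

theorem eq_squarefreeExponent_support_of_le {C : Finset σ} {b : σ →₀ ℕ}
    (hb : b ≤ squarefreeExponent C) : b = squarefreeExponent b.support := by
  classical
  ext x
  have hx := hb x
  rw [squarefreeExponent_apply] at hx ⊢
  split_ifs at hx ⊢ <;> grind

variable {R : Type*} [CommSemiring R]

theorem prod_X_eq_monomial_squarefreeExponent (C : Finset σ) :
    ∏ i ∈ C, (X i : MvPolynomial σ R) = monomial (squarefreeExponent C) 1 := by
  simp only [squarefreeExponent, monomial_sum_one, X]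

theorem prod_X_injective [Nontrivial R] :
    Function.Injective fun C : Finset σ => ∏ i ∈ C, (X i : MvPolynomial σ R) := by
  intro C D h
  simp only [prod_X_eq_monomial_squarefreeExponent] at h
  simpa using congrArg Finsupp.support (monomial_left_injective one_ne_zero h)

end SquarefreeMonomial

section CoverIdeal

variable {K : Type*} [Field K] {n : ℕ} {G : SimpleGraph (Fin n)}

theorem coverIdeal_eq_span_monomial :
    coverIdeal K G = Ideal.span ((fun s => monomial s (1 : K)) ''
      (squarefreeExponent '' {C : Finset (Fin n) | IsVertexCover G ↑C})) := by
  simp only [coverIdeal, Set.image_image, ← prod_X_eq_monomial_squarefreeExponent]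
  congr 1
  ext p
  simp [eq_comm]

theorem monomial_mem_coverIdeal_iff (a : Fin n →₀ ℕ) :
    monomial a (1 : K) ∈ coverIdeal K G ↔ IsVertexCover G ↑a.support := by
  classical
  rw [coverIdeal_eq_span_monomial, mem_ideal_span_monomial_image]
  simp only [support_monomial, one_ne_zero, if_false, Finset.mem_singleton, forall_eq,
    Set.exists_mem_image, Set.mem_ofPred_eq, squarefreeExponent_le_iff]
  exact ⟨fun ⟨C, hC, hCa⟩ u v huv => (hC huv).imp (@hCa u) (@hCa v),
    fun ha => ⟨a.support, ha, subset_rfl⟩⟩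

theorem isMinimalMonomialGen_coverIdeal_iff (p : MvPolynomial (Fin n) K) :
    IsMinimalMonomialGen (coverIdeal K G) p ↔
      ∃ C : Finset (Fin n), Minimal (fun D : Finset (Fin n) => IsVertexCover G ↑D) C ∧
        p = ∏ i ∈ C, X i := by
  simp only [prod_X_eq_monomial_squarefreeExponent]
  constructor
  · rintro ⟨a, rfl, haI, hmin⟩
    rw [monomial_mem_coverIdeal_iff] at haI
    have ha : a = squarefreeExponent a.support := by
      by_contra hne
      exact hmin _ (squarefreeExponent_le_iff.2 subset_rfl) (Ne.symm hne)
        ((monomial_mem_coverIdeal_iff _).2 (by simpa using haI))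
    refine ⟨a.support, ⟨haI, fun D hD hDa => ?_⟩, by rw [← ha]⟩
    by_contra hne
    refine hmin _ (squarefreeExponent_le_iff.2 hDa) (fun h => hne ?_)
      ((monomial_mem_coverIdeal_iff _).2 (by simpa using hD))
    rw [← h, support_squarefreeExponent]
  · rintro ⟨C, hC, rfl⟩
    refine ⟨_, rfl, (monomial_mem_coverIdeal_iff _).2 (by simpa using hC.1), fun b hb hne hbI => ?_⟩
    rw [monomial_mem_coverIdeal_iff] at hbI
    have hbC : b.support ⊆ C := by simpa using Finsupp.support_mono hb
    exact hne (by rw [eq_squarefreeExponent_support_of_le hb, hC.eq_of_ge hbI hbC])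

end CoverIdeal

section CliqueStar

variable {K : Type*} [Field K] {n : ℕ} [DecidableEq (MvPolynomial (Fin n) K)]
  {A L : Finset (Fin n)} {c : Fin n}

theorem setOf_isMinimalMonomialGen_coverIdeal_of_isCliqueUnionStar {G : SimpleGraph (Fin n)}
    (hG : G.IsCliqueUnionStar A c L)
    (hc : c ∈ A) (hA : ∃ a ∈ A, a ≠ c) :
    {p | IsMinimalMonomialGen (coverIdeal K G) p} =
      ↑(insert (∏ v ∈ A.erase c ∪ L, X v)
        ((A.erase c).image fun a => ∏ v ∈ A.erase a, (X v : MvPolynomial (Fin n) K))) := by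
  ext p
  simp only [Set.mem_ofPred_eq, isMinimalMonomialGen_coverIdeal_iff,
    minimal_isVertexCover_iff_of_isCliqueUnionStar hG hc hA, Finset.coe_insert, Finset.coe_image,
    Set.mem_insert_iff, Set.mem_image, Finset.mem_coe, Finset.mem_erase]
  grind

theorem card_insert_prod_X_erase_union_image (hc : c ∈ A) (hcL : c ∉ L) :
    (insert (∏ v ∈ A.erase c ∪ L, (X v : MvPolynomial (Fin n) K))
      ((A.erase c).image fun a => ∏ v ∈ A.erase a, (X v : MvPolynomial (Fin n) K))).card =
      A.card := by
  rw [Finset.card_insert_of_notMem, Finset.card_image_of_injOn, Finset.card_erase_add_one hc]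
  · exact fun a ha b hb hab => A.erase_injOn (Finset.mem_of_mem_erase ha)
      (Finset.mem_of_mem_erase hb) (prod_X_injective hab)
  · simp only [Finset.mem_image, Finset.mem_erase, not_exists, not_and]
    intro a hac hab
    have := congrArg (c ∈ ·) (prod_X_injective hab)
    simp_all

end CliqueStar

section Reindex

variable {ι σ R : Type*} [Fintype ι] [DecidableEq ι] [DecidableEq σ] [CommSemiring R]
  [DecidableEq (MvPolynomial σ R)]

theorem insert_prod_X_image_erase_eq {α : ι → σ} (hα : Function.Injective α) {L : Finset σ}
    (hL : Disjoint (Finset.univ.image α) L) (i : ι) :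
    insert ((∏ l ∈ Finset.univ.erase i, X (α l)) * ∏ w ∈ L, X w)
        ((Finset.univ.erase i).image fun j =>
          ∏ l ∈ Finset.univ.erase j, (X (α l) : MvPolynomial σ R)) =
      insert (∏ v ∈ (Finset.univ.image α).erase (α i) ∪ L, X v)
        (((Finset.univ.image α).erase (α i)).image fun a =>
          ∏ v ∈ (Finset.univ.image α).erase a, X v) := by
  have hprod (j : ι) : ∏ l ∈ Finset.univ.erase j, (X (α l) : MvPolynomial σ R) =
      ∏ v ∈ (Finset.univ.image α).erase (α j), X v := by
    rw [← Finset.image_erase hα, Finset.prod_image hα.injOn]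
  rw [hprod, ← Finset.prod_union (hL.mono_left (Finset.erase_subset _ _)),
    ← Finset.image_erase hα, Finset.image_image]
  exact congrArg _ (Finset.image_congr fun j _ => hprod j)

end Reindex

theorem StrictMono.disjoint_image_univ_Ioo {m : ℕ} {β : Type*} [LinearOrder β]
    [LocallyFiniteOrder β] {α : Fin m → β} (hα : StrictMono α) {i j : Fin m}
    (hij : (j : ℕ) ≤ i + 1) :
    Disjoint (Finset.univ.image α) (Finset.Ioo (α i) (α j)) := by
  simp only [Finset.disjoint_left, Finset.mem_image, Finset.mem_Ioo]
  rintro _ ⟨k, -, rfl⟩ ⟨hik, hkj⟩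
  rw [hα.lt_iff_lt, Fin.lt_def] at hik hkj
  omega

attribute [local instance] Classical.propDecidable

/-- `H` is the union of the complete graph on the vertices `α 0 < α 1 < … < α (m-1)`
(with `α (m-1) = n-1` and `m < n`) and a single star with center `α i₀` (`i₀ ≥ 1`) whose
leaves are the vertices strictly between `α (i₀ - 1)` and `α i₀` — these being exactly the
`n - m` vertices outside the complete graph.  Then `I_c(H)` has exactly `m` minimal
monomial squarefree generators, namely, for each `j ≠ i₀`, the monomial
`∏_{l ≠ j} X (α l)`, together with `(∏_{l ≠ i₀} X (α l)) * ∏_{α (i₀-1) < w < α i₀} X w`. -/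
theorem coverIdeal_gens_one_star_mid
    (n m : ℕ) (K : Type*) [Field K]
    (α : Fin m → Fin n) (hα : StrictMono α)
    (i₀ : Fin m) (hi₀ : 0 < (i₀ : ℕ))
    (H : SimpleGraph (Fin n))
    (hH : ∀ u v : Fin n, H.Adj u v ↔
      (∃ i j : Fin m, i ≠ j ∧ u = α i ∧ v = α j) ∨
      (u = α i₀ ∧ α ⟨(i₀ : ℕ) - 1, lt_of_le_of_lt (Nat.sub_le _ _) i₀.isLt⟩ < v ∧ v < α i₀) ∨
      (v = α i₀ ∧ α ⟨(i₀ : ℕ) - 1, lt_of_le_of_lt (Nat.sub_le _ _) i₀.isLt⟩ < u ∧ u < α i₀)) :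
    ∃ S : Finset (MvPolynomial (Fin n) K),
      S = insert
          ((∏ l ∈ Finset.univ.erase i₀, X (α l)) *
            ∏ w ∈ Finset.Ioo (α ⟨(i₀ : ℕ) - 1, lt_of_le_of_lt (Nat.sub_le _ _) i₀.isLt⟩) (α i₀),
              X w)
          ((Finset.univ.erase i₀).image
            fun j : Fin m => ∏ l ∈ Finset.univ.erase j, X (α l)) ∧
      {p | IsMinimalMonomialGen (coverIdeal K H) p} = ↑S ∧
      S.card = m := by
  set i₁ : Fin m := ⟨(i₀ : ℕ) - 1, lt_of_le_of_lt (Nat.sub_le _ _) i₀.isLt⟩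
  set A := Finset.univ.image α
  set L := Finset.Ioo (α i₁) (α i₀)
  have hinj := hα.injective
  have hG : H.IsCliqueUnionStar A (α i₀) L := by
    intro u v
    simp only [hH, A, L, Finset.coe_image, Finset.coe_univ, Set.image_univ, Set.mem_range,
      Finset.coe_Ioo, Set.mem_Ioo]
    grind
  have hc : α i₀ ∈ A := Finset.mem_image_of_mem _ (Finset.mem_univ _)
  have hA : ∃ a ∈ A, a ≠ α i₀ := ⟨α ⟨0, by omega⟩, Finset.mem_image_of_mem _ (Finset.mem_univ _),
    fun h => hi₀.ne (congrArg Fin.val (hinj h))⟩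
  refine ⟨_, rfl, ?_, ?_⟩ <;>
    rw [insert_prod_X_image_erase_eq hinj (hα.disjoint_image_univ_Ioo (by simp only [i₁]; omega))]
  · exact setOf_isMinimalMonomialGen_coverIdeal_of_isCliqueUnionStar hG hc hA
  · rw [card_insert_prod_X_erase_union_image hc (by simp),
      Finset.card_image_of_injective _ hinj, Finset.card_univ, Fintype.card_fin]
end

section
/- Let H be the connected graph on n vertices that is the union of a complete graph K_m (m < n) and star graphs centered at vertices of K_m, each star having at least one leaf, meeting K_m only in its center, distinct stars being otherwise vertex-disjoint, and the leaves of the stars being exactly the n − m vertices outside K_m. Then the ideal of vertex covers I_c(H) has a linear resolution (a minimal graded free resolution in which all minimal generators of I_c(H) have the same degree d and all syzygy matrices have linear entries, i.e., the j-th module in the resolution is generated in degree d + j) if and only if every star graph in the decomposition has exactly two vertices, i.e., every star has exactly one edge. -/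
open MvPolynomial Finset

/-!
A linear resolution forces `I_c(H)` to be generated in a single degree `d`. Then every minimal
vertex cover `S` has exactly `d` vertices: `∏_{v ∈ S} X_v` lies in the ideal, so it is divisible by
a term of some degree-`d` generator, and that term in turn dominates the monomial of a cover
contained in `S`, which by minimality is `S` itself. The clique `A` and, for each `a ∈ A`, the set
`(A \ {a}) ∪ leaves(a)` are minimal covers, whence `|leaves(a)| = 1`.

Conversely, if every star is a single edge `{a, ℓ_a}`, the cover ideal is generated by `X^A` and the
`X^{A \ a} X_{ℓ_a}`, and its syzygies are generated by the independent linear relations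
`X_a · X^{A \ a} X_{ℓ_a} = X_{ℓ_a} · X^A` (each `X_a` is prime and divides every generator except
`X^{A \ a} X_{ℓ_a}`), so `0 → R^m → R^(m+1) → I_c(H) → 0` is a linear resolution.
-/

namespace MvPolynomial

variable {σ R : Type*}

theorem exists_mem_support_le_of_mem_span [CommSemiring R] {s : Set (MvPolynomial σ R)}
    {p : MvPolynomial σ R} (hp : p ∈ Ideal.span s) {b : σ →₀ ℕ} (hb : b ∈ p.support) :
    ∃ q ∈ s, ∃ v ∈ q.support, v ≤ b := by
  classical
  induction hp using Submodule.span_induction generalizing b with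
  | mem q hq => exact ⟨q, hq, b, hb, le_rfl⟩
  | zero => simp at hb
  | add p q _ _ hp hq =>
    rcases Finset.mem_union.mp (support_add hb) with hb | hb
    exacts [hp hb, hq hb]
  | smul r q _ hq =>
    obtain ⟨u, -, v, hv, rfl⟩ := Finset.mem_add.mp (support_mul r q hb)
    obtain ⟨q', hq', w, hw, hwv⟩ := hq hv
    exact ⟨q', hq', w, hw, hwv.trans le_add_self⟩

theorem prod_X_eq_monomial [CommSemiring R] (s : Finset σ) :
    ∏ i ∈ s, (X i : MvPolynomial σ R) = monomial (Finsupp.indicator s fun _ _ => 1) 1 := by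
  simpa using prod_X_pow (R := R) 1 s

theorem X_dvd_prod_X_iff [CommSemiring R] [Nontrivial R] {i : σ} {s : Finset σ} :
    (X i : MvPolynomial σ R) ∣ ∏ j ∈ s, X j ↔ i ∈ s := by
  classical
  rw [prod_X_eq_monomial, X_dvd_monomial]
  simp [Finsupp.indicator_apply]

theorem isHomogeneous_prod_X [CommSemiring R] (s : Finset σ) :
    (∏ i ∈ s, (X i : MvPolynomial σ R)).IsHomogeneous s.card := by
  simpa using IsHomogeneous.prod s X 1 fun i _ => isHomogeneous_X R i

end MvPolynomial

theorem Finsupp.indicator_one_le_iff {σ : Type*} {s t : Finset σ} :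
    (indicator s fun _ _ => 1) ≤ (indicator t fun _ _ => (1 : ℕ)) ↔ s ⊆ t := by
  classical
  refine ⟨fun h i hi => ?_, fun h i => ?_⟩
  · by_contra hit
    simpa [indicator_apply, hi, hit] using h i
  · by_cases hi : i ∈ s
    · simp [indicator_apply, hi, h hi]
    · simp [indicator_apply, hi]

section CoverIdeal

variable {K : Type*} [Field K] {n : ℕ} {G : SimpleGraph (Fin n)}

theorem prod_X_mem_coverIdeal {C : Finset (Fin n)} (hC : IsVertexCover G ↑C) :
    ∏ i ∈ C, (X i : MvPolynomial (Fin n) K) ∈ coverIdeal K G :=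
  Ideal.subset_span ⟨C, hC, rfl⟩

theorem exists_isVertexCover_indicator_le_of_mem_support {p : MvPolynomial (Fin n) K}
    (hp : p ∈ coverIdeal K G) {b : Fin n →₀ ℕ} (hb : b ∈ p.support) :
    ∃ C : Finset (Fin n), IsVertexCover G ↑C ∧ (Finsupp.indicator C fun _ _ => 1) ≤ b := by
  classical
  obtain ⟨-, ⟨C, hC, rfl⟩, v, hv, hvb⟩ := exists_mem_support_le_of_mem_span hp hb
  rw [prod_X_eq_monomial, support_monomial, if_neg one_ne_zero, Finset.mem_singleton] at hv
  exact ⟨C, hC, hv ▸ hvb⟩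

theorem card_eq_of_minimal_of_span_eq_coverIdeal {ι : Type*} {g : ι → MvPolynomial (Fin n) K}
    {d : ℕ} (hspan : Ideal.span (Set.range g) = coverIdeal K G)
    (hg : ∀ i, (g i).IsHomogeneous d) {S : Finset (Fin n)}
    (hS : Minimal (fun C : Finset (Fin n) => IsVertexCover G ↑C) S) : S.card = d := by
  set b : Fin n →₀ ℕ := Finsupp.indicator S fun _ _ => 1
  have hb : b ∈ (∏ i ∈ S, (X i : MvPolynomial (Fin n) K)).support := by
    simp [prod_X_eq_monomial, b]
  have hSmem := prod_X_mem_coverIdeal (K := K) hS.prop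
  rw [← hspan] at hSmem
  obtain ⟨-, ⟨i, rfl⟩, v, hv, hvb⟩ := exists_mem_support_le_of_mem_span hSmem hb
  have hgi : g i ∈ coverIdeal K G := hspan ▸ Ideal.subset_span ⟨i, rfl⟩
  obtain ⟨C, hC, hCv⟩ := exists_isVertexCover_indicator_le_of_mem_support hgi hv
  have hCS : C = S := hS.eq_of_le hC (Finsupp.indicator_one_le_iff.mp (hCv.trans hvb))
  rw [hCS] at hCv
  have hvb : v = b := le_antisymm hvb hCv
  calc S.card = Finsupp.weight 1 b := (isHomogeneous_prod_X S (mem_support_iff.mp hb)).symm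
    _ = d := hvb ▸ hg i (mem_support_iff.mp hv)

theorem coverIdeal_eq_span_prod_X {ι : Type*} (cov : ι → Finset (Fin n))
    (hcov : ∀ i, IsVertexCover G ↑(cov i))
    (hmin : ∀ C : Finset (Fin n), IsVertexCover G ↑C → ∃ i, cov i ⊆ C) :
    coverIdeal K G = Ideal.span (Set.range fun i => ∏ v ∈ cov i, X v) := by
  refine le_antisymm (Ideal.span_le.mpr ?_) (Ideal.span_le.mpr ?_)
  · rintro _ ⟨C, hC, rfl⟩
    obtain ⟨i, hi⟩ := hmin C hC
    rw [SetLike.mem_coe, ← Finset.prod_sdiff hi]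
    exact Ideal.mul_mem_left _ _ (Ideal.subset_span ⟨i, rfl⟩)
  · rintro _ ⟨i, rfl⟩
    exact prod_X_mem_coverIdeal (hcov i)

end CoverIdeal

section Syzygy

open Matrix

variable {R : Type*} [CommRing R] {m : ℕ}

def syzygyMatrix (x y : Fin m → R) : Matrix (Fin (m + 1)) (Fin m) R :=
  Matrix.of (vecCons (-y) fun i => Pi.single i (x i))

theorem syzygyMatrix_mulVec (x y t : Fin m → R) :
    syzygyMatrix x y *ᵥ t = Fin.cons (-(y ⬝ᵥ t)) fun i => x i * t i := by
  rw [syzygyMatrix, cons_mulVec, neg_dotProduct]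
  ext k
  refine Fin.cases rfl (fun i => ?_) k
  simp [mulVec, single_dotProduct]

theorem ker_mulVecLin_syzygyMatrix [NoZeroDivisors R] {x : Fin m → R} (hx : ∀ i, x i ≠ 0)
    (y : Fin m → R) : LinearMap.ker (syzygyMatrix x y).mulVecLin = ⊥ := by
  refine (Submodule.eq_bot_iff _).mpr fun t ht => funext fun i => ?_
  have := congrFun ht i.succ
  simp only [Matrix.mulVecLin_apply, syzygyMatrix_mulVec, Fin.cons_succ, Pi.zero_apply] at this
  exact (mul_eq_zero.mp this).resolve_left (hx i)

theorem ker_linearCombination_eq_range_syzygyMatrix [IsDomain R] {x y : Fin m → R}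
    {g : Fin (m + 1) → R} (hg : g 0 ≠ 0) (hrel : ∀ i, x i * g i.succ = y i * g 0)
    (hx : ∀ i, Prime (x i)) (hdvd : ∀ i k, k ≠ i.succ → x i ∣ g k)
    (hndvd : ∀ i, ¬ x i ∣ g i.succ) :
    LinearMap.ker (Fintype.linearCombination R g) =
      LinearMap.range (syzygyMatrix x y).mulVecLin := by
  ext c
  simp only [LinearMap.mem_ker, Fintype.linearCombination_apply, LinearMap.mem_range,
    Matrix.mulVecLin_apply, smul_eq_mul]
  constructor
  · intro hc
    have hxc : ∀ i, x i ∣ c i.succ := fun i => by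
      have hrest : x i ∣ ∑ k ∈ Finset.univ.erase i.succ, c k * g k :=
        Finset.dvd_sum fun k hk => dvd_mul_of_dvd_right (hdvd i k (Finset.ne_of_mem_erase hk)) _
      have hsplit : c i.succ * g i.succ + ∑ k ∈ Finset.univ.erase i.succ, c k * g k = 0 :=
        (Finset.add_sum_erase _ (fun k => c k * g k) (Finset.mem_univ _)).trans hc
      have hall := (dvd_add_left hrest).mp (hsplit ▸ dvd_zero (x i))
      exact ((hx i).dvd_or_dvd hall).resolve_right (hndvd i)
    choose t ht using hxc
    refine ⟨t, funext fun k => Fin.cases ?_ (fun i => ?_) k⟩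
    · have hc0 : (c 0 + y ⬝ᵥ t) * g 0 = 0 := by
        rw [Fin.sum_univ_succ] at hc
        rw [← hc, add_mul, dotProduct, Finset.sum_mul]
        congr 1
        refine Finset.sum_congr rfl fun i _ => ?_
        rw [ht i, mul_right_comm (x i), hrel i]
        ring
      rw [syzygyMatrix_mulVec, Fin.cons_zero]
      linear_combination -(mul_eq_zero.mp hc0).resolve_right hg
    · rw [syzygyMatrix_mulVec, Fin.cons_succ, ht i]
  · rintro ⟨t, rfl⟩
    simp only [Fin.sum_univ_succ, syzygyMatrix_mulVec, Fin.cons_zero, Fin.cons_succ, dotProduct,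
      neg_mul, Finset.sum_mul, ← Finset.sum_neg_distrib, ← Finset.sum_add_distrib]
    refine Finset.sum_eq_zero fun i _ => ?_
    linear_combination t i * hrel i

end Syzygy

theorem isHomogeneous_syzygyMatrix {σ R : Type*} [CommRing R] {m d : ℕ}
    {x y : Fin m → MvPolynomial σ R} (hx : ∀ i, (x i).IsHomogeneous d)
    (hy : ∀ i, (y i).IsHomogeneous d) (k : Fin (m + 1)) (i : Fin m) :
    (syzygyMatrix x y k i).IsHomogeneous d := by
  induction k using Fin.cases with
  | zero => simpa [syzygyMatrix] using (mem_homogeneousSubmodule d _).mp (neg_mem (hy i))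
  | succ j =>
    by_cases hij : i = j
    · subst hij
      simpa [syzygyMatrix] using hx i
    · simpa [syzygyMatrix, Pi.single_apply, hij] using isHomogeneous_zero σ R d

section LinearResolution

variable {K : Type*} [Field K] {n : ℕ}

def HasLinearResolution (I : Ideal (MvPolynomial (Fin n) K)) : Prop :=
  ∃ (d : ℕ) (rk : ℕ → ℕ) (dgr : ∀ j : ℕ, Fin (rk j) → ℕ)
    (g : Fin (rk 0) → MvPolynomial (Fin n) K)
    (M : ∀ j : ℕ, Matrix (Fin (rk j)) (Fin (rk (j + 1))) (MvPolynomial (Fin n) K)),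
    IsMinimalGradedFreeResolution I rk dgr g M ∧
    (∃ p : ℕ, ∀ j : ℕ, p ≤ j → rk j = 0) ∧
    (∀ (j : ℕ) (i : Fin (rk j)), dgr j i = d + j)

theorem HasLinearResolution.exists_span_eq_of_isHomogeneous {I : Ideal (MvPolynomial (Fin n) K)}
    (h : HasLinearResolution I) : ∃ (d N : ℕ) (g : Fin N → MvPolynomial (Fin n) K),
      Ideal.span (Set.range g) = I ∧ ∀ i, (g i).IsHomogeneous d := by
  obtain ⟨d, rk, dgr, g, -, ⟨hspan, hg, -⟩, -, hdgr⟩ := h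
  exact ⟨d, rk 0, g, hspan, fun i => by simpa [hdgr] using hg i⟩

def twoTermRank (N r : ℕ) : ℕ → ℕ
  | 0 => N
  | 1 => r
  | _ + 2 => 0

def twoTermMatrices {R : Type*} [Zero R] {N r : ℕ} (M : Matrix (Fin N) (Fin r) R) :
    ∀ j, Matrix (Fin (twoTermRank N r j)) (Fin (twoTermRank N r (j + 1))) R
  | 0 => M
  | _ + 1 => 0

theorem hasLinearResolution_of_exact {I : Ideal (MvPolynomial (Fin n) K)} {N r d : ℕ}
    (hd : 0 < d) {g : Fin N → MvPolynomial (Fin n) K} (hspan : Ideal.span (Set.range g) = I)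
    (hg : ∀ i, (g i).IsHomogeneous d) {M : Matrix (Fin N) (Fin r) (MvPolynomial (Fin n) K)}
    (hM : ∀ k i, (M k i).IsHomogeneous 1)
    (hexact : LinearMap.ker (Fintype.linearCombination _ g) = LinearMap.range M.mulVecLin)
    (hinj : LinearMap.ker M.mulVecLin = ⊥) : HasLinearResolution I := by
  refine ⟨d, twoTermRank N r, fun j _ => d + j, g, twoTermMatrices M,
    ⟨hspan, hg, fun i => ?_, fun j k i => ?_, fun j k i hle => ?_, hexact, fun j => ?_⟩,
    ⟨2, fun j hj => ?_⟩, fun _ _ => rfl⟩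
  · rw [constantCoeff_eq]
    exact (hg i).coeff_eq_zero (by simpa using hd.ne)
  · cases j with
    | zero => simpa [twoTermMatrices] using hM k i
    | succ j => exact isHomogeneous_zero _ _ _
  · simp at hle
  · cases j with
    | zero =>
      have : IsEmpty (Fin (twoTermRank N r 2)) := Fin.isEmpty'
      exact hinj.trans (LinearMap.range_eq_bot.mpr (Subsingleton.elim _ _)).symm
    | succ j =>
      have : IsEmpty (Fin (twoTermRank N r (j + 1 + 1))) := Fin.isEmpty'
      exact Subsingleton.elim _ _
  · obtain ⟨j, rfl⟩ := Nat.exists_eq_add_of_le' hj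
    rfl

end LinearResolution

section CliqueWithStars

variable {V : Type*}

def IsCliqueWithStars (H : SimpleGraph V) (A : Finset V) (f : V → V) : Prop :=
  ∀ u v : V, H.Adj u v ↔ (u ∈ A ∧ v ∈ A ∧ u ≠ v) ∨ (u ∉ A ∧ v = f u) ∨ (v ∉ A ∧ u = f v)

theorem IsCliqueWithStars.isVertexCover {H : SimpleGraph V} {A : Finset V} {f : V → V}
    (hH : IsCliqueWithStars H A f) (hf : ∀ v, v ∉ A → f v ∈ A) : IsVertexCover H ↑A := by
  intro u v huv
  rcases (hH u v).mp huv with ⟨hu, -⟩ | ⟨hu, rfl⟩ | ⟨hv, rfl⟩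
  exacts [Or.inl hu, Or.inr (hf u hu), Or.inl (hf v hv)]

variable [Fintype V] [DecidableEq V]

def leaves (A : Finset V) (f : V → V) (a : V) : Finset V :=
  univ.filter fun v => v ∉ A ∧ f v = a

def starCover (A : Finset V) (f : V → V) (a : V) : Finset V :=
  A.erase a ∪ leaves A f a

variable {H : SimpleGraph V} {A : Finset V} {f : V → V} {a : V}

theorem notMem_starCover (ha : a ∈ A) : a ∉ starCover A f a := by
  simp [starCover, leaves, ha]

theorem disjoint_erase_leaves : Disjoint (A.erase a) (leaves A f a) :=
  disjoint_left.mpr fun _ hvA hvl => (mem_filter.mp hvl).2.1 (mem_of_mem_erase hvA)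

theorem card_starCover (ha : a ∈ A) :
    (starCover A f a).card = A.card - 1 + (leaves A f a).card := by
  rw [starCover, card_union_of_disjoint disjoint_erase_leaves, card_erase_of_mem ha]

theorem X_mul_prod_starCover {R : Type*} [CommSemiring R] (ha : a ∈ A) :
    X a * ∏ v ∈ starCover A f a, (X v : MvPolynomial V R)
      = (∏ v ∈ leaves A f a, X v) * ∏ v ∈ A, X v := by
  rw [starCover, prod_union disjoint_erase_leaves, ← mul_prod_erase A _ ha]
  ring

theorem IsCliqueWithStars.isVertexCover_starCover (hH : IsCliqueWithStars H A f)
    (hf : ∀ v, v ∉ A → f v ∈ A) (a : V) : IsVertexCover H ↑(starCover A f a) := by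
  intro u v huv
  simp only [mem_coe, starCover, leaves, mem_union, mem_erase, mem_filter, mem_univ, true_and]
  rcases (hH u v).mp huv with ⟨hu, hv, huv⟩ | ⟨hu, rfl⟩ | ⟨hv, rfl⟩
  · by_cases hua : u = a
    · exact Or.inr (Or.inl ⟨hua ▸ huv.symm, hv⟩)
    · exact Or.inl (Or.inl ⟨hua, hu⟩)
  · by_cases hfu : f u = a
    · exact Or.inl (Or.inr ⟨hu, hfu⟩)
    · exact Or.inr (Or.inl ⟨hfu, hf u hu⟩)
  · by_cases hfv : f v = a
    · exact Or.inr (Or.inr ⟨hv, hfv⟩)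
    · exact Or.inl (Or.inl ⟨hfv, hf v hv⟩)

theorem IsCliqueWithStars.starCover_subset (hH : IsCliqueWithStars H A f) (ha : a ∈ A)
    {C : Finset V} (hC : IsVertexCover H ↑C) (haC : a ∉ C) : starCover A f a ⊆ C := by
  intro v hv
  have hva : H.Adj v a := by
    rcases mem_union.mp hv with hv | hv
    · exact (hH v a).mpr (Or.inl ⟨mem_of_mem_erase hv, ha, ne_of_mem_erase hv⟩)
    · obtain ⟨-, hvA, hfv⟩ := mem_filter.mp hv
      exact (hH v a).mpr (Or.inr (Or.inl ⟨hvA, hfv.symm⟩))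
  exact (hC hva).resolve_right haC

theorem IsCliqueWithStars.minimal_isVertexCover (hH : IsCliqueWithStars H A f)
    (hf : ∀ v, v ∉ A → f v ∈ A) (hstar : ∀ a ∈ A, ∃ v, v ∉ A ∧ f v = a) :
    Minimal (fun C : Finset V => IsVertexCover H ↑C) A := by
  refine ⟨hH.isVertexCover hf, fun C hC hCA a ha => ?_⟩
  by_contra haC
  obtain ⟨v, hvA, hfv⟩ := hstar a ha
  have hv : v ∈ starCover A f a := mem_union_right _ (mem_filter.mpr ⟨mem_univ v, hvA, hfv⟩)
  exact hvA (hCA (hH.starCover_subset ha hC haC hv))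

theorem IsCliqueWithStars.minimal_isVertexCover_starCover (hH : IsCliqueWithStars H A f)
    (hf : ∀ v, v ∉ A → f v ∈ A) (ha : a ∈ A) :
    Minimal (fun C : Finset V => IsVertexCover H ↑C) (starCover A f a) :=
  ⟨hH.isVertexCover_starCover hf a, fun _ hC hCS =>
    hH.starCover_subset ha hC fun haC => notMem_starCover ha (hCS haC)⟩

theorem IsCliqueWithStars.subset_or_exists_starCover_subset (hH : IsCliqueWithStars H A f)
    {C : Finset V} (hC : IsVertexCover H ↑C) : A ⊆ C ∨ ∃ a ∈ A, starCover A f a ⊆ C := by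
  by_cases hAC : A ⊆ C
  · exact Or.inl hAC
  · obtain ⟨a, ha, haC⟩ := not_subset.mp hAC
    exact Or.inr ⟨a, ha, hH.starCover_subset ha hC haC⟩

end CliqueWithStars

theorem IsCliqueWithStars.hasLinearResolution_coverIdeal {K : Type*} [Field K] {n : ℕ}
    {H : SimpleGraph (Fin n)} {A : Finset (Fin n)} {f : Fin n → Fin n}
    (hH : IsCliqueWithStars H A f) (hf : ∀ v, v ∉ A → f v ∈ A) (hA : A.Nonempty)
    (hleaves : ∀ a ∈ A, (leaves A f a).card = 1) : HasLinearResolution (coverIdeal K H) := by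
  set e := A.orderEmbOfFin rfl
  have he : ∀ i, e i ∈ A := A.orderEmbOfFin_mem rfl
  set cov : Fin (A.card + 1) → Finset (Fin n) := Fin.cons A fun i => starCover A f (e i)
  have hcov : ∀ k, IsVertexCover H ↑(cov k) :=
    Fin.cases (hH.isVertexCover hf) fun i => hH.isVertexCover_starCover hf _
  have hcard : ∀ k, (cov k).card = A.card := Fin.cases rfl fun i => by
    have hApos := hA.card_pos
    simp only [cov, Fin.cons_succ, card_starCover (he i), hleaves _ (he i)]
    omega
  have hmem : ∀ i k, k ≠ i.succ → e i ∈ cov k := fun i k hk => by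
    induction k using Fin.cases with
    | zero => exact he i
    | succ j =>
      refine mem_union_left _ (mem_erase.mpr ⟨fun h => hk ?_, he i⟩)
      rw [e.injective h]
  refine hasLinearResolution_of_exact hA.card_pos (g := fun k => ∏ v ∈ cov k, X v)
    (M := syzygyMatrix (fun i => X (e i)) fun i => ∏ v ∈ leaves A f (e i), X v) ?_
    (fun k => hcard k ▸ isHomogeneous_prod_X _) ?_ ?_ ?_
  · refine (coverIdeal_eq_span_prod_X cov hcov fun C hC => ?_).symm
    rcases hH.subset_or_exists_starCover_subset hC with hAC | ⟨a, ha, haC⟩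
    · exact ⟨0, hAC⟩
    · obtain ⟨i, rfl⟩ : a ∈ Set.range e := by rwa [range_orderEmbOfFin]
      exact ⟨i.succ, haC⟩
  · refine isHomogeneous_syzygyMatrix (fun i => isHomogeneous_X K _) fun i => ?_
    simpa [hleaves _ (he i)] using isHomogeneous_prod_X (R := K) (leaves A f (e i))
  · refine ker_linearCombination_eq_range_syzygyMatrix ?_ (fun i => X_mul_prod_starCover (he i))
      (fun i => X_prime) (fun i k hk => X_dvd_prod_X_iff.mpr (hmem i k hk))
      (fun i => X_dvd_prod_X_iff.not.mpr (notMem_starCover (he i)))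
    exact prod_ne_zero_iff.mpr fun v _ => X_ne_zero v
  · exact ker_mulVecLin_syzygyMatrix (fun i => X_ne_zero _) _

/-- For the graph `H` (complete graph on `A`, `|A| = m < n`, with a star centered at each
vertex of `A` having at least one leaf, the leaves being exactly the vertices outside `A`),
the ideal of vertex covers `I_c(H)` has a linear resolution — i.e. for some `d` it has a
(finite) minimal graded free resolution `⋯ → F₂ → F₁ → R → R/I_c(H) → 0` in which every
generator of `F_{j+1}` (the `j`-th term of the resolution of `I_c(H)`, so in particular all
minimal generators of `I_c(H)`) has internal degree exactly `d + j` — if and only if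
every star has exactly one edge. -/
theorem coverIdeal_linear_resolution_iff
    (n m : ℕ) (hmn : m < n) (K : Type*) [Field K]
    (A : Finset (Fin n)) (hA : A.card = m)
    (f : Fin n → Fin n) (hf : ∀ v : Fin n, v ∉ A → f v ∈ A)
    (hstar : ∀ a ∈ A, ∃ v : Fin n, v ∉ A ∧ f v = a)
    (H : SimpleGraph (Fin n))
    (hH : ∀ u v : Fin n, H.Adj u v ↔
      (u ∈ A ∧ v ∈ A ∧ u ≠ v) ∨ (u ∉ A ∧ v = f u) ∨ (v ∉ A ∧ u = f v)) :
    (∃ (d : ℕ) (rk : ℕ → ℕ) (dgr : ∀ j : ℕ, Fin (rk j) → ℕ)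
      (g : Fin (rk 0) → MvPolynomial (Fin n) K)
      (M : ∀ j : ℕ, Matrix (Fin (rk j)) (Fin (rk (j + 1))) (MvPolynomial (Fin n) K)),
      IsMinimalGradedFreeResolution (coverIdeal K H) rk dgr g M ∧
      (∃ p : ℕ, ∀ j : ℕ, p ≤ j → rk j = 0) ∧
      (∀ (j : ℕ) (i : Fin (rk j)), dgr j i = d + j))
    ↔ (∀ a ∈ A, (Finset.univ.filter fun v : Fin n => v ∉ A ∧ f v = a).card = 1) := by
  have hH : IsCliqueWithStars H A f := hH
  change HasLinearResolution (coverIdeal K H) ↔ ∀ a ∈ A, (leaves A f a).card = 1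
  constructor
  · intro hres a ha
    obtain ⟨d, N, g, hspan, hg⟩ := hres.exists_span_eq_of_isHomogeneous
    have hAd := card_eq_of_minimal_of_span_eq_coverIdeal hspan hg
      (hH.minimal_isVertexCover hf hstar)
    have hSd := card_eq_of_minimal_of_span_eq_coverIdeal hspan hg
      (hH.minimal_isVertexCover_starCover hf ha)
    have hApos := card_pos.mpr ⟨a, ha⟩
    rw [card_starCover ha] at hSd
    omega
  · obtain ⟨v, -, hv⟩ := exists_mem_notMem_of_card_lt_card (s := A) (t := univ)
      (by simpa [hA] using hmn)
    exact hH.hasLinearResolution_coverIdeal hf ⟨f v, hf v hv⟩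
end

section
/- Let H be the connected graph on n vertices that is the union of a complete graph K_m (m < n) and star graphs centered at vertices of K_m, each star meeting K_m only in its center, distinct stars being otherwise vertex-disjoint, and the leaves of the stars being exactly the n − m vertices outside K_m. Then the complementary graph of H is chordal; that is, every cycle of length greater than 3 in the complement of H has a chord. -/
/-! The complement of `H` is a split graph: `A` is independent in it and the vertices outside `A`
form a clique. Every cycle of length at least four in a split graph has a vertex whose two
neighbours on the cycle lie in the clique (a vertex of the independent set if the cycle meets it,
any vertex otherwise); these two neighbours are distinct, adjacent, and not consecutive on the
cycle, so they span a chord. -/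

open SimpleGraph

namespace SimpleGraph.Walk

variable {V : Type*} {G : SimpleGraph V} {u v : V}

lemma IsChord.of_rotate [DecidableEq V] {c : G.Walk v v} {e : Sym2 V} (h : u ∈ c.support)
    (he : (c.rotate u h).IsChord e) : c.IsChord e := by
  induction e using Sym2.ind with
  | _ x y =>
    rw [isChord_sym2Mk, mem_support_rotate_iff, mem_support_rotate_iff,
      (c.rotate_edges u h).mem_iff] at he
    exact isChord_sym2Mk.mpr he

lemma IsCycle.snd_penultimate_notMem_edges {c : G.Walk u u} (hc : c.IsCycle)
    (hlen : 3 < c.length) : s(c.snd, c.penultimate) ∉ c.edges := by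
  intro hmem
  rw [← List.cons_head_tail (edges_eq_nil.not.mpr hc.not_nil), head_edges_eq_mk_start_snd,
    ← edges_tail, List.mem_cons] at hmem
  rcases hmem with hhead | htail
  · have := (c.adj_penultimate hc.not_nil).ne
    grind [Sym2.eq_iff]
  · have hgetVert : c.getVert 2 = c.getVert (c.length - 1) := by
      simpa [getVert_tail] using (hc.isPath_tail.eq_snd_of_mem_edges htail).symm
    have := hc.getVert_injOn (by simp; lia) (by simp; lia) hgetVert
    lia

lemma IsCycle.isChord_snd_penultimate {c : G.Walk u u} (hc : c.IsCycle) (hlen : 3 < c.length)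
    (hadj : G.Adj c.snd c.penultimate) : c.IsChord s(c.snd, c.penultimate) :=
  isChord_sym2Mk.mpr ⟨hadj, hc.snd_penultimate_notMem_edges hlen,
    c.getVert_mem_support 1, c.getVert_mem_support _⟩

lemma IsCycle.not_isChordless_of_isIndepSet_of_isClique_compl {s : Set V}
    (hs : G.IsIndepSet s) (hsc : G.IsClique sᶜ) {c : G.Walk v v} (hc : c.IsCycle)
    (hlen : 3 < c.length) : ¬ c.IsChordless := by
  classical
  obtain ⟨a, ha, hnbr⟩ : ∃ a ∈ c.support, ∀ b ∈ c.support, G.Adj a b → b ∉ s := by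
    by_cases h : ∃ a ∈ c.support, a ∈ s
    · obtain ⟨a, ha, has⟩ := h
      exact ⟨a, ha, fun b _ hab hbs => hs has hbs hab.ne hab⟩
    · push Not at h
      exact ⟨v, c.start_mem_support, fun b hb _ => h b hb⟩
  set r := c.rotate a ha
  have hr : r.IsCycle := hc.rotate ha
  have hsupp : ∀ b, b ∈ r.support → b ∈ c.support := fun b => (c.mem_support_rotate_iff a ha).mp
  have hx : r.snd ∉ s :=
    hnbr _ (hsupp _ (r.getVert_mem_support 1)) (r.adj_snd hr.not_nil)
  have hy : r.penultimate ∉ s :=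
    hnbr _ (hsupp _ (r.getVert_mem_support _)) (r.adj_penultimate hr.not_nil).symm
  have hadj : G.Adj r.snd r.penultimate := hsc hx hy hr.snd_ne_penultimate
  exact fun h => h ((hr.isChord_snd_penultimate (by simpa [r]) hadj).of_rotate ha)

end SimpleGraph.Walk

theorem complement_chordal_general
    (n : ℕ)
    (A : Finset (Fin n))
    (f : Fin n → Fin n) (hf : ∀ v : Fin n, v ∉ A → f v ∈ A)
    (H : SimpleGraph (Fin n))
    (hH : ∀ u v : Fin n, H.Adj u v ↔
      (u ∈ A ∧ v ∈ A ∧ u ≠ v) ∨ (u ∉ A ∧ v = f u) ∨ (v ∉ A ∧ u = f v)) :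
    ∀ (v : Fin n) (w : Hᶜ.Walk v v), w.IsCycle → 3 < w.length →
      ∃ x y : Fin n, x ∈ w.support ∧ y ∈ w.support ∧ Hᶜ.Adj x y ∧ s(x, y) ∉ w.edges := by
  intro v w hw hlen
  by_contra! hchordless
  have hindep : Hᶜ.IsIndepSet (A : Set (Fin n)) := fun a ha b hb hne hadj =>
    hadj.2 ((hH a b).2 (Or.inl ⟨ha, hb, hne⟩))
  have hclique : Hᶜ.IsClique (A : Set (Fin n))ᶜ := by
    intro a ha b hb hne
    refine ⟨hne, fun hadj => ?_⟩
    rcases (hH a b).1 hadj with ⟨haA, -, -⟩ | ⟨-, rfl⟩ | ⟨-, rfl⟩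
    · exact ha haA
    · exact hb (hf a ha)
    · exact ha (hf b hb)
  exact hw.not_isChordless_of_isIndepSet_of_isClique_compl hindep hclique hlen
    (Walk.isChordless_iff_forall_mem_edges.mpr hchordless)

/-- Let `H` be the union of a complete graph on the vertex set `A` of cardinality `m`
(`m < n`) and star graphs centered at vertices of `A`, the leaves being exactly the
`n - m` vertices outside `A`.  Then the complement of `H` is chordal: every cycle of
length greater than `3` in `Hᶜ` has a chord, i.e. an edge of `Hᶜ` joining two vertices
of the cycle which is not an edge of the cycle. -/
theorem complement_chordal
    (n m : ℕ) (hmn : m < n)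
    (A : Finset (Fin n)) (hA : A.card = m)
    (f : Fin n → Fin n) (hf : ∀ v : Fin n, v ∉ A → f v ∈ A)
    (H : SimpleGraph (Fin n))
    (hH : ∀ u v : Fin n, H.Adj u v ↔
      (u ∈ A ∧ v ∈ A ∧ u ≠ v) ∨ (u ∉ A ∧ v = f u) ∨ (v ∉ A ∧ u = f v)) :
    ∀ (v : Fin n) (w : Hᶜ.Walk v v), w.IsCycle → 3 < w.length →
      ∃ x y : Fin n, x ∈ w.support ∧ y ∈ w.support ∧ Hᶜ.Adj x y ∧ s(x, y) ∉ w.edges :=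
  complement_chordal_general n A f hf H hH
end
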